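/- arXiv:1203.3777 — 5 statements merged into one kernel-verified Lean document; each statement's English description precedes it below -/
import Mathlib

section
/- Let n ≥ 1, c > 2, ε > 0, and r ∈ ℕ. For any p ∈ W_n, setting p̃^r = p + ε·g^r_c, one has l1(p − p̃^r) = l1(ε·g^r_c) ≤ ε·c/(c−2). -/
open scoped ComplexOrder

noncomputable section

/-- The Weyl algebra `W_n`: a complex `*`-algebra generated by `a 1, …, a n` and their
adjoints, satisfying the canonical commutation relations, in which the normally ordered
monomials `(a*)^s a^t` form a basis (this pins the algebra down up to `*`-isomorphism). -/
structure WeylAlgebra (n : ℕ) where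
  carrier : Type
  [ring : Ring carrier]
  [alg : Algebra ℂ carrier]
  [starRing : StarRing carrier]
  [starModule : StarModule ℂ carrier]
  a : Fin n → carrier
  comm_aa : ∀ i j, a i * a j = a j * a i
  comm_ss : ∀ i j, star (a i) * star (a j) = star (a j) * star (a i)
  ccr : ∀ i j : Fin n, a i * star (a j) - star (a j) * a i = if i = j then 1 else 0
  basis : Module.Basis ((Fin n → ℕ) × (Fin n → ℕ)) ℂ carrier
  basis_eq : ∀ st : (Fin n → ℕ) × (Fin n → ℕ),
    basis st = (List.ofFn fun i => star (a i) ^ st.1 i).prod *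
               (List.ofFn fun i => (a i) ^ st.2 i).prod

attribute [instance] WeylAlgebra.ring WeylAlgebra.alg WeylAlgebra.starRing
  WeylAlgebra.starModule

namespace WeylAlgebra

variable {n : ℕ} (W : WeylAlgebra n)

/-- The monomial `a^t = ∏ i, (a i)^(t i)`. -/
def amon (t : Fin n → ℕ) : W.carrier := (List.ofFn fun i => W.a i ^ t i).prod

/-- The normally ordered monomial `(a*)^s a^t`. -/
def nmon (s t : Fin n → ℕ) : W.carrier :=
  (List.ofFn fun i => star (W.a i) ^ s i).prod * (List.ofFn fun i => W.a i ^ t i).prod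

/-- The `l₁`-norm of the coefficients of the (unique) normal form of `p`. -/
def l1 (p : W.carrier) : ℝ := (W.basis.repr p).sum fun _ c => ‖c‖

/-- The degree of `p`: the maximal `‖s‖₁ + ‖t‖₁` over monomials appearing in the normal
form of `p`. -/
def deg (p : W.carrier) : ℕ :=
  (W.basis.repr p).support.sup fun st => (∑ i, st.1 i) + (∑ i, st.2 i)

/-- `p` is a sum of squares, i.e. `p ∈ Σ²`. -/
def IsSOS (p : W.carrier) : Prop :=
  ∃ (N : ℕ) (f : Fin N → W.carrier), p = ∑ i, star (f i) * f i

/-- `p ∈ Σ²_k`: `p` is a sum of squares of elements of degree at most `k`. -/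
def IsSOSdeg (k : ℕ) (p : W.carrier) : Prop :=
  ∃ (N : ℕ) (f : Fin N → W.carrier), (∀ i, W.deg (f i) ≤ k) ∧ p = ∑ i, star (f i) * f i

/-- The element `g^r_c = ∑_{‖t‖₁ ≤ r} (n-1)!/(c^{‖t‖₁} (n+‖t‖₁-1)!) • a^t (a^t)*`. -/
def gpoly (c : ℝ) (r : ℕ) : W.carrier :=
  ∑ t ∈ (Fintype.piFinset fun _ : Fin n => Finset.range (r + 1)).filter
      (fun t => ∑ i, t i ≤ r),
    ((Nat.factorial (n - 1) : ℂ) /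
        ((c : ℂ) ^ (∑ i, t i) * (Nat.factorial (n + (∑ i, t i) - 1) : ℂ))) •
      (W.amon t * star (W.amon t))

/-- The value in `W` of a single letter (`Sum.inl i ↦ a i`, `Sum.inr i ↦ (a i)*`). -/
def letterVal : Fin n ⊕ Fin n → W.carrier
  | Sum.inl i => W.a i
  | Sum.inr i => star (W.a i)

/-- The value in `W` of a word (monomial) in the letters `a_1,…,a_n,a_1*,…,a_n*`. -/
def wordVal (w : List (Fin n ⊕ Fin n)) : W.carrier := (w.map W.letterVal).prod

end WeylAlgebra

/-- The domain of the Schrödinger representation: finitely supported functions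
`ℕ^n → ℂ`. -/
abbrev DSpace (n : ℕ) := (Fin n → ℕ) →₀ ℂ

/-- The number basis vector `e_m`. -/
def eVec {n : ℕ} (m : Fin n → ℕ) : DSpace n := Finsupp.single m 1

/-- The inner product `⟨f, g⟩ = ∑_m conj (f m) * g m` on `DSpace n`
(antilinear in the first argument). -/
def innerD {n : ℕ} (f g : DSpace n) : ℂ := f.sum fun m c => (starRingEnd ℂ) c * g m

/-- The Schrödinger (Fock) representation of the Weyl algebra `W` on `DSpace n`,
specified by its action on the number basis. -/
structure Schrodinger {n : ℕ} (W : WeylAlgebra n) where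
  rep : W.carrier →ₐ[ℂ] Module.End ℂ (DSpace n)
  rep_a : ∀ (i : Fin n) (m : Fin n → ℕ),
    rep (W.a i) (eVec m) =
      (Real.sqrt (m i) : ℂ) • eVec (Function.update m i (m i - 1))
  rep_astar : ∀ (i : Fin n) (m : Fin n → ℕ),
    rep (star (W.a i)) (eVec m) =
      (Real.sqrt (m i + 1) : ℂ) • eVec (Function.update m i (m i + 1))

namespace Schrodinger

variable {n : ℕ} {W : WeylAlgebra n} (S : Schrodinger W)

/-- `π(p) ≥ 0`: the quadratic form of `π(p)` is nonnegative on the domain. -/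
def PiNonneg (p : W.carrier) : Prop := ∀ φ : DSpace n, 0 ≤ innerD φ (S.rep p φ)

/-- The set of energies `⟨φ, π(p) φ⟩` over normalized `φ` in the domain. -/
def energySet (p : W.carrier) : Set ℝ :=
  { x | ∃ φ : DSpace n, innerD φ φ = 1 ∧ (innerD φ (S.rep p φ)).re = x }

/-- `λ_inf(p)`, the infimum of `⟨φ, π(p) φ⟩` over normalized `φ`. -/
def lambdaInf (p : W.carrier) : ℝ := sInf (S.energySet p)

end Schrodinger

/-!
In a single mode, `a a* = a* a + 1` gives the normal ordering
`a^k (a*)^k = ∑_j C(k,j)² j! (a*)^(k-j) a^(k-j)`, whose coefficients sum to at most `2^k k!`.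
Distinct modes commute, so `l1 (a^t (a^t)*) ≤ ∏ 2^(t_i) t_i! ≤ 2^|t| |t|!`. Multiplying this
bound by the coefficient of `a^t (a^t)*` in `g^r_c` and by the number `C(n+d-1, d)` of
multi-indices of degree `d` gives exactly `(2/c)^d`, and the geometric series is at most
`c/(c-2)`.
-/

open Finset
open scoped Nat

section CanonicalCommutation

variable {R : Type*} [Ring R] {x y : R}

theorem pow_mul_eq_mul_pow_add_nsmul (h : x * y = y * x + 1) (k : ℕ) :
    x ^ k * y = y * x ^ k + k • x ^ (k - 1) := by
  induction k with
  | zero => simp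
  | succ k ih =>
    rcases k with _ | k
    · simpa using h
    · calc x ^ (k + 2) * y = x * (x ^ (k + 1) * y) := by rw [pow_succ' x (k + 1), mul_assoc]
        _ = (x * y) * x ^ (k + 1) + (k + 1) • (x * x ^ k) := by
            rw [ih, mul_add, mul_smul_comm, mul_assoc]; rfl
        _ = y * x ^ (k + 2) + (k + 2) • x ^ (k + 1) := by
            rw [h, add_mul, one_mul, mul_assoc, ← pow_succ', ← pow_succ', add_assoc,
              ← succ_nsmul']

theorem pow_mul_pow_eq_sum_nsmul (h : x * y = y * x + 1) (k m : ℕ) :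
    x ^ k * y ^ m = ∑ j ∈ range (k + 1),
      (k.choose j * m.choose j * j !) • (y ^ (m - j) * x ^ (k - j)) := by
  induction m with
  | zero => simp [sum_range_succ' _ k]
  | succ m ih =>
    have expand : x ^ k * y ^ (m + 1) = ∑ j ∈ range (k + 1),
        ((k.choose j * m.choose j * j !) • (y ^ (m - j) * y * x ^ (k - j)) +
          (k.choose j * m.choose j * j ! * (k - j)) • (y ^ (m - j) * x ^ (k - j - 1))) := by
      rw [pow_succ, ← mul_assoc, ih, sum_mul]
      refine sum_congr rfl fun j _ => ?_
      rw [smul_mul_assoc, mul_assoc (y ^ (m - j)), pow_mul_eq_mul_pow_add_nsmul h, mul_add,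
        mul_smul_comm, smul_add, smul_smul, ← mul_assoc]
    -- Shift the contraction terms by one index and merge them by Pascal's rule in `m`.
    rw [expand, sum_add_distrib, sum_range_succ' _ k, sum_range_succ _ k, sum_range_succ' _ k,
      Nat.sub_self, mul_zero, zero_smul, add_zero, add_comm, ← add_assoc, ← sum_add_distrib]
    congr 1
    · refine sum_congr rfl fun j _ => ?_
      have hcoef : k.choose j * m.choose j * j ! * (k - j) =
          k.choose (j + 1) * m.choose j * (j + 1)! := by
        rw [Nat.factorial_succ, mul_right_comm, mul_right_comm (k.choose j),
          ← Nat.choose_succ_right_eq]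
        ring
      have hy : m.choose (j + 1) • (y ^ (m - (j + 1)) * y * x ^ (k - (j + 1))) =
          m.choose (j + 1) • (y ^ (m - j) * x ^ (k - (j + 1))) := by
        rcases lt_or_ge j m with hjm | hjm
        · rw [← pow_succ, show m - (j + 1) + 1 = m - j by omega]
        · rw [Nat.choose_eq_zero_of_lt (by omega), zero_smul, zero_smul]
      rw [hcoef, Nat.sub_sub, Nat.add_sub_add_right, Nat.choose_succ_succ',
        mul_right_comm _ (m.choose (j + 1)), mul_smul (_ * (j + 1)!), hy, ← mul_smul,
        ← add_smul]
      congr 1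
      ring
    · simp [pow_succ]

end CanonicalCommutation

theorem Nat.sum_choose_mul_choose_mul_factorial_le (k : ℕ) :
    ∑ j ∈ range (k + 1), k.choose j * k.choose j * j ! ≤ 2 ^ k * k ! := by
  calc ∑ j ∈ range (k + 1), k.choose j * k.choose j * j !
      ≤ ∑ j ∈ range (k + 1), k.choose j * k ! := by
        refine sum_le_sum fun j hj => ?_
        rw [mul_assoc]
        refine Nat.mul_le_mul_left _ ?_
        rw [← Nat.choose_mul_factorial_mul_factorial (Nat.lt_succ_iff.mp (mem_range.mp hj))]
        exact Nat.le_mul_of_pos_right _ (Nat.factorial_pos _)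
    _ = 2 ^ k * k ! := by rw [← sum_mul, Nat.sum_range_choose]

section OrderedProducts

variable {M : Type*} [Monoid M]

theorem List.prod_ofFn_mul_prod_ofFn {m : ℕ} (x y : Fin m → M)
    (h : ∀ i j, j < i → Commute (x i) (y j)) :
    (List.ofFn x).prod * (List.ofFn y).prod = (List.ofFn fun i => x i * y i).prod := by
  induction m with
  | zero => simp
  | succ m ih =>
    have hy₀ : Commute (List.ofFn fun i => x i.succ).prod (y 0) :=
      Commute.list_prod_left _ _ fun z hz => by
        obtain ⟨i, rfl⟩ := List.mem_ofFn.mp hz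
        exact h _ _ i.succ_pos
    simp only [List.ofFn_succ, List.prod_cons]
    rw [← ih _ _ fun i j hij => h _ _ (Fin.succ_lt_succ_iff.mpr hij), mul_assoc,
      ← mul_assoc _ (y 0), hy₀.eq]
    simp only [mul_assoc]

theorem star_prod_ofFn [StarMul M] {m : ℕ} (x : Fin m → M) (h : ∀ i j, Commute (x i) (x j)) :
    star (List.ofFn x).prod = (List.ofFn fun i => star (x i)).prod := by
  induction m with
  | zero => simp
  | succ m ih =>
    simp only [List.ofFn_succ, List.prod_cons, star_mul]
    rw [ih _ fun i j => h _ _]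
    refine (Commute.list_prod_left _ _ fun z hz => ?_).eq
    obtain ⟨i, rfl⟩ := List.mem_ofFn.mp hz
    exact (h _ _).star_star

end OrderedProducts

theorem Fintype.sum_piFinset_succ {β : Type*} [AddCommMonoid β] {κ : Type*} {m : ℕ}
    (s : Fin (m + 1) → Finset κ) (F : (Fin (m + 1) → κ) → β) :
    ∑ g ∈ piFinset s, F g =
      ∑ j ∈ s 0, ∑ g ∈ piFinset (Fin.tail s), F (Fin.cons j g) := by
  have := Finset.filter_piFinset_eq_map_consEquiv s (fun _ => True)
  simp only [filter_true] at this
  rw [this, sum_map, sum_product]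
  rfl

theorem List.prod_ofFn_sum_smul {S A κ : Type*} [CommSemiring S] [Semiring A] [Algebra S A]
    {m : ℕ} (s : Fin m → Finset κ) (c : Fin m → κ → S) (v : Fin m → κ → A) :
    (List.ofFn fun i => ∑ j ∈ s i, c i j • v i j).prod =
      ∑ g ∈ Fintype.piFinset s, (∏ i, c i (g i)) • (List.ofFn fun i => v i (g i)).prod := by
  induction m with
  | zero => simp
  | succ m ih =>
    rw [Fintype.sum_piFinset_succ, List.ofFn_succ, List.prod_cons, ih, sum_mul_sum]
    refine sum_congr rfl fun j _ => sum_congr rfl fun g _ => ?_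
    simp only [List.ofFn_succ, List.prod_cons, Fin.cons_zero, Fin.cons_succ, Fin.prod_univ_succ,
      smul_mul_smul_comm]

namespace Module.Basis

variable {ι 𝕜 M : Type*} [NormedField 𝕜] [AddCommGroup M] [Module 𝕜 M]

def l1Seminorm (b : Basis ι 𝕜 M) : Seminorm 𝕜 M :=
  Seminorm.of (fun x => (b.repr x).sum fun _ c => ‖c‖)
    (fun x y => by
      classical
      simp only [map_add]
      rw [Finsupp.sum_of_support_subset _ Finsupp.support_add _ fun _ _ => norm_zero,
        Finsupp.sum_of_support_subset _ Finset.subset_union_left _ fun _ _ => norm_zero,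
        Finsupp.sum_of_support_subset _ Finset.subset_union_right _ fun _ _ => norm_zero,
        ← Finset.sum_add_distrib]
      exact Finset.sum_le_sum fun i _ => norm_add_le _ _)
    (fun a x => by
      simp only [map_smul, Finsupp.sum_smul_index' (fun _ => norm_zero), smul_eq_mul, norm_mul,
        Finsupp.mul_sum])

theorem l1Seminorm_apply (b : Basis ι 𝕜 M) (x : M) :
    b.l1Seminorm x = (b.repr x).sum fun _ c => ‖c‖ := rfl

theorem l1Seminorm_self (b : Basis ι 𝕜 M) (i : ι) : b.l1Seminorm (b i) = 1 := by
  simp [l1Seminorm_apply]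

end Module.Basis

theorem Finset.card_piAntidiag_univ_fin (n d : ℕ) :
    #(piAntidiag (univ : Finset (Fin n)) d) = (n + d - 1).choose d := by
  rw [← map_sym_eq_piAntidiag, card_map, sym_univ, card_univ, Sym.card_sym_eq_choose,
    Fintype.card_fin]

theorem Finset.sum_filter_sum_le_eq_sum_choose_smul {M : Type*} [AddCommMonoid M] (n r : ℕ)
    (F : ℕ → M) :
    ∑ t ∈ (Fintype.piFinset fun _ : Fin n => range (r + 1)).filter (fun t => ∑ i, t i ≤ r),
      F (∑ i, t i) = ∑ d ∈ range (r + 1), (n + d - 1).choose d • F d := by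
  have hmaps : ∀ t ∈ (Fintype.piFinset fun _ : Fin n => range (r + 1)).filter
      (fun t => ∑ i, t i ≤ r), ∑ i, t i ∈ range (r + 1) :=
    fun t ht => mem_range.mpr (Nat.lt_succ_of_le (mem_filter.mp ht).2)
  rw [← sum_fiberwise_of_maps_to hmaps]
  refine sum_congr rfl fun d hd => ?_
  have hfiber : {t ∈ (Fintype.piFinset fun _ : Fin n => range (r + 1)).filter
      (fun t => ∑ i, t i ≤ r) | ∑ i, t i = d} = piAntidiag univ d := by
    ext t
    simp only [mem_filter, Fintype.mem_piFinset, mem_range, mem_piAntidiag]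
    refine ⟨fun h => ⟨h.2, fun i _ => mem_univ i⟩, fun ⟨h, _⟩ => ?_⟩
    have hd' := mem_range.mp hd
    refine ⟨⟨fun i => ?_, h.trans_le (Nat.lt_succ_iff.mp hd')⟩, h⟩
    have := single_le_sum (fun j _ => Nat.zero_le (t j)) (mem_univ i)
    rw [h] at this; omega
  rw [hfiber, ← card_piAntidiag_univ_fin, ← sum_const]
  exact sum_congr rfl fun t ht => by rw [(mem_piAntidiag.mp ht).1]

theorem choose_mul_coeff_mul_two_pow_factorial_eq {n : ℕ} (hn : 1 ≤ n) {c : ℝ} (hc : c ≠ 0)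
    (d : ℕ) :
    (n + d - 1).choose d * ((n - 1)! / (c ^ d * (n + d - 1)!) * (2 ^ d * d !)) =
      (2 / c) ^ d := by
  have hfac : ((n + d - 1)! : ℝ) = (n + d - 1).choose d * d ! * (n - 1)! := by
    have := Nat.choose_mul_factorial_mul_factorial (show d ≤ n + d - 1 by omega)
    rw [show n + d - 1 - d = n - 1 by omega] at this
    exact_mod_cast this.symm
  have hchoose : ((n + d - 1).choose d : ℝ) ≠ 0 := by
    exact_mod_cast (Nat.choose_pos (show d ≤ n + d - 1 by omega)).ne'
  rw [hfac, div_pow]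
  field_simp

namespace WeylAlgebra

variable {n : ℕ} (W : WeylAlgebra n)

theorem a_mul_star_a (i : Fin n) : W.a i * star (W.a i) = star (W.a i) * W.a i + 1 := by
  simpa [sub_eq_iff_eq_add'] using W.ccr i i

theorem commute_a_star_a {i j : Fin n} (h : i ≠ j) : Commute (W.a i) (star (W.a j)) :=
  sub_eq_zero.mp (by simpa [h] using W.ccr i j)

theorem l1_eq_l1Seminorm : W.l1 = W.basis.l1Seminorm := rfl

theorem l1_nmon (s t : Fin n → ℕ) : W.l1 (W.nmon s t) = 1 := by
  rw [l1_eq_l1Seminorm, nmon, ← W.basis_eq (s, t), Module.Basis.l1Seminorm_self]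

theorem amon_mul_star_amon (t : Fin n → ℕ) :
    W.amon t * star (W.amon t) =
      (List.ofFn fun i => W.a i ^ t i * star (W.a i) ^ t i).prod := by
  rw [amon, star_prod_ofFn _ fun i j => Commute.pow_pow (W.comm_aa i j) _ _]
  simp only [star_pow]
  exact List.prod_ofFn_mul_prod_ofFn _ _ fun i j hji =>
    (W.commute_a_star_a hji.ne').pow_pow _ _

theorem prod_ofFn_star_pow_mul_pow (e : Fin n → ℕ) :
    (List.ofFn fun i => star (W.a i) ^ e i * W.a i ^ e i).prod = W.nmon e e :=
  (List.prod_ofFn_mul_prod_ofFn _ _ fun _ _ hji =>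
    ((W.commute_a_star_a hji.ne).pow_pow _ _).symm).symm

theorem amon_mul_star_amon_eq_sum (t : Fin n → ℕ) :
    W.amon t * star (W.amon t) =
      ∑ g ∈ Fintype.piFinset fun i => range (t i + 1),
        (∏ i, (((t i).choose (g i) * (t i).choose (g i) * (g i)! : ℕ) : ℂ)) •
          W.nmon (fun i => t i - g i) (fun i => t i - g i) := by
  simp_rw [amon_mul_star_amon, pow_mul_pow_eq_sum_nsmul (W.a_mul_star_a _),
    ← Nat.cast_smul_eq_nsmul ℂ, List.prod_ofFn_sum_smul, prod_ofFn_star_pow_mul_pow]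

theorem l1_amon_mul_star_amon_le (t : Fin n → ℕ) :
    W.l1 (W.amon t * star (W.amon t)) ≤ 2 ^ (∑ i, t i) * (∑ i, t i)! := by
  rw [amon_mul_star_amon_eq_sum, l1_eq_l1Seminorm]
  calc _ ≤ ∑ g ∈ Fintype.piFinset fun i => range (t i + 1),
        ∏ i, (((t i).choose (g i) * (t i).choose (g i) * (g i)! : ℕ) : ℝ) := by
        refine (le_sum_of_subadditive _ (map_zero _).le (map_add_le_add _) _ _).trans_eq ?_
        refine sum_congr rfl fun g _ => ?_
        rw [map_smul_eq_mul, ← l1_eq_l1Seminorm, l1_nmon, mul_one, norm_prod]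
        simp only [Complex.norm_natCast]
    _ = ∏ i, ∑ j ∈ range (t i + 1),
          (((t i).choose j * (t i).choose j * j ! : ℕ) : ℝ) := by
        rw [prod_univ_sum]
    _ ≤ ∏ i, ((2 ^ t i * (t i)! : ℕ) : ℝ) := by
        refine prod_le_prod (fun i _ => by positivity) fun i _ => ?_
        exact_mod_cast Nat.sum_choose_mul_choose_mul_factorial_le (t i)
    _ ≤ 2 ^ (∑ i, t i) * (∑ i, t i)! := by
        push_cast
        rw [prod_mul_distrib, prod_pow_eq_pow_sum]
        gcongr
        exact_mod_cast Nat.le_of_dvd (Nat.factorial_pos _)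
          (Nat.prod_factorial_dvd_factorial_sum _ _)

theorem l1_gpoly_le (hn : 1 ≤ n) {c : ℝ} (hc : 2 < c) (r : ℕ) :
    W.l1 (W.gpoly c r) ≤ c / (c - 2) := by
  have hc₀ : 0 < c := by linarith
  calc W.l1 (W.gpoly c r)
      ≤ ∑ t ∈ (Fintype.piFinset fun _ : Fin n => range (r + 1)).filter
            (fun t => ∑ i, t i ≤ r),
          (n - 1)! / (c ^ (∑ i, t i) * (n + ∑ i, t i - 1)!) *
            (2 ^ (∑ i, t i) * (∑ i, t i)!) := by
        rw [gpoly, l1_eq_l1Seminorm]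
        refine (le_sum_of_subadditive _ (map_zero _).le (map_add_le_add _) _ _).trans
          (sum_le_sum fun t _ => ?_)
        rw [map_smul_eq_mul, ← l1_eq_l1Seminorm, norm_div, norm_mul, norm_pow,
          Complex.norm_natCast, Complex.norm_natCast, Complex.norm_real,
          Real.norm_of_nonneg hc₀.le]
        gcongr
        exact W.l1_amon_mul_star_amon_le t
    _ = ∑ d ∈ range (r + 1), (2 / c) ^ d := by
        refine (sum_filter_sum_le_eq_sum_choose_smul n r
          fun d => (n - 1)! / (c ^ d * (n + d - 1)!) * (2 ^ d * d !)).trans ?_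
        exact sum_congr rfl fun d _ => by
          rw [nsmul_eq_mul, choose_mul_coeff_mul_two_pow_factorial_eq hn hc₀.ne']
    _ ≤ (2 / c) ^ 0 / (1 - 2 / c) := by
        rw [range_eq_Ico]
        exact geom_sum_Ico_le_of_lt_one (by positivity) ((div_lt_one hc₀).mpr hc)
    _ = c / (c - 2) := by field_simp

end WeylAlgebra

/-- For `p̃^r = p + ε·g^r_c` one has
`l1(p - p̃^r) = l1(ε·g^r_c) ≤ ε·c/(c-2)`. -/
theorem l1_perturbation_bound {n : ℕ} (hn : 1 ≤ n) (c : ℝ) (hc : 2 < c)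
    (ε : ℝ) (hε : 0 < ε) (r : ℕ) (W : WeylAlgebra n) (p : W.carrier) :
    W.l1 (p - (p + (ε : ℂ) • W.gpoly c r)) = W.l1 ((ε : ℂ) • W.gpoly c r) ∧
    W.l1 ((ε : ℂ) • W.gpoly c r) ≤ ε * (c / (c - 2)) := by
  rw [WeylAlgebra.l1_eq_l1Seminorm, sub_add_cancel_left, map_neg_eq_map, map_smul_eq_mul,
    Complex.norm_real, Real.norm_of_nonneg hε.le, ← WeylAlgebra.l1_eq_l1Seminorm]
  exact ⟨rfl, by gcongr; exact W.l1_gpoly_le hn hc r⟩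
end
end

section
/- Let n ≥ 1, let c > 2 be fixed, and let p ∈ W_n be hermitian (p* = p) such that λ_inf(p) > −∞. Then for every δ > 0 there exists q ∈ ℝ, q > 0, such that for all r ∈ ℕ and all ε > 0: λ_inf(p) ≤ λ_inf(p + ε·g^r_c) ≤ λ_inf(p) + δ + ε·q. -/
/-!
In the number basis `e_m` the operator `π(g^r_c)` is diagonal, since
`π(a^t (a^t)*) e_m = ∏ᵢ (mᵢ + 1) ⋯ (mᵢ + tᵢ) • e_m`; hence `⟨φ, π(g^r_c) φ⟩ ≥ 0`, which gives the
lower bound. Its eigenvalue at `e_m` is bounded uniformly in `r`: for `k = ‖t‖₁` the coefficient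
of `a^t (a^t)*` is at most `1 / (c^k k!)`, the weight `∏ᵢ (mᵢ + 1) ⋯ (mᵢ + tᵢ)` is at most
`(‖m‖₁ + k)! = k! (k + 1) ⋯ (k + ‖m‖₁)`, and at most `(k + 1)^n` multi-indices have degree `k`, so
the eigenvalue is dominated by the convergent series `∑ₖ (k + 1) ⋯ (k + ‖m‖₁ + n) c⁻ᵏ`. Testing
`p + ε g^r_c` on a fixed `φ` with `⟨φ, π(p) φ⟩ < λ_inf(p) + δ` gives the upper bound, with `q` one
more than the `|φ(m)|²`-weighted sum of these series over the finite support of `φ`.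
-/

open scoped ComplexOrder

noncomputable section

open Finset Function

section NumberBasis

variable {n : ℕ}

lemma innerD_add_right (f g h : DSpace n) : innerD f (g + h) = innerD f g + innerD f h := by
  simp [innerD, mul_add, Finsupp.sum_add]

lemma innerD_smul_right (f g : DSpace n) (c : ℂ) : innerD f (c • g) = c * innerD f g := by
  simp only [innerD, Finsupp.smul_apply, smul_eq_mul, Finsupp.mul_sum]
  exact Finsupp.sum_congr fun _ _ => by ring

lemma innerD_eVec_self (m : Fin n → ℕ) : innerD (eVec m) (eVec m) = 1 := by
  simp [innerD, eVec]

lemma apply_eq_mul_of_apply_eVec {T : Module.End ℂ (DSpace n)} {d : (Fin n → ℕ) → ℂ}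
    (hT : ∀ m, T (eVec m) = d m • eVec m) (φ : DSpace n) (m : Fin n → ℕ) :
    T φ m = d m * φ m := by
  induction φ using Finsupp.induction_linear with
  | zero => simp
  | add f g hf hg => simp [hf, hg, mul_add]
  | single m' b =>
    rw [← Finsupp.smul_single_one, map_smul]
    change (b • T (eVec m')) m = _
    rw [hT]
    by_cases h : m' = m
    · subst h; simp [eVec, mul_comm]
    · simp [eVec, h]

lemma innerD_re_of_apply_eVec {T : Module.End ℂ (DSpace n)} {d : (Fin n → ℕ) → ℝ}
    (hT : ∀ m, T (eVec m) = (d m : ℂ) • eVec m) (φ : DSpace n) :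
    (innerD φ (T φ)).re = ∑ m ∈ φ.support, d m * Complex.normSq (φ m) := by
  rw [innerD, Finsupp.sum, Complex.re_sum]
  refine sum_congr rfl fun m _ => ?_
  rw [apply_eq_mul_of_apply_eVec hT]
  simp [Complex.mul_re, Complex.normSq_apply]
  ring

lemma list_prod_map_apply_eVec (T : Fin n → Module.End ℂ (DSpace n)) (w : Fin n → ℕ → ℂ)
    (σ : Fin n → ℕ → ℕ) (hT : ∀ i m, T i (eVec m) = w i (m i) • eVec (update m i (σ i (m i))))
    {l : List (Fin n)} (hl : l.Nodup) (m : Fin n → ℕ) :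
    (l.map T).prod (eVec m) =
      (∏ i ∈ l.toFinset, w i (m i)) • eVec (fun j => if j ∈ l then σ j (m j) else m j) := by
  induction l with
  | nil => simp
  | cons i l ih =>
    obtain ⟨hi, hl⟩ := List.nodup_cons.mp hl
    have hshift : update (fun j => if j ∈ l then σ j (m j) else m j) i (σ i (m i)) =
        fun j => if j ∈ i :: l then σ j (m j) else m j := by
      ext j
      by_cases hj : j = i
      · subst hj; simp
      · simp [hj]
    rw [List.map_cons, List.prod_cons, Module.End.mul_apply, ih hl, map_smul, hT, if_neg hi,
      hshift, smul_smul, List.toFinset_cons, prod_insert (by simpa using hi), mul_comm]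

lemma list_prod_map_apply_eVec_of_mem (T : Fin n → Module.End ℂ (DSpace n))
    (w : Fin n → ℕ → ℂ) (σ : Fin n → ℕ → ℕ)
    (hT : ∀ i m, T i (eVec m) = w i (m i) • eVec (update m i (σ i (m i))))
    {l : List (Fin n)} (hl : l.Nodup) (hmem : ∀ i, i ∈ l) (m : Fin n → ℕ) :
    (l.map T).prod (eVec m) = (∏ i, w i (m i)) • eVec (fun j => σ j (m j)) := by
  have huniv : l.toFinset = univ := eq_univ_of_forall fun i => List.mem_toFinset.mpr (hmem i)
  simpa [huniv, hmem] using list_prod_map_apply_eVec T w σ hT hl m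

end NumberBasis

namespace Schrodinger

variable {n : ℕ} {W : WeylAlgebra n} (S : Schrodinger W)

lemma rep_star_pow_eVec (i : Fin n) (k : ℕ) (m : Fin n → ℕ) :
    S.rep (star (W.a i) ^ k) (eVec m) =
      (√((m i + 1).ascFactorial k : ℝ) : ℂ) • eVec (update m i (m i + k)) := by
  induction k with
  | zero => simp
  | succ k ih =>
    rw [pow_succ', map_mul, Module.End.mul_apply, ih, map_smul, S.rep_astar, update_self,
      update_idem, smul_smul, ← Complex.ofReal_mul, ← Real.sqrt_mul (by positivity),
      Nat.ascFactorial_succ, add_assoc]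
    push_cast
    ring_nf

-- For `k > m i` both sides vanish, so the truncated subtraction is harmless.
lemma rep_pow_eVec (i : Fin n) (k : ℕ) (m : Fin n → ℕ) :
    S.rep (W.a i ^ k) (eVec m) =
      (√((m i).descFactorial k : ℝ) : ℂ) • eVec (update m i (m i - k)) := by
  induction k with
  | zero => simp
  | succ k ih =>
    rw [pow_succ', map_mul, Module.End.mul_apply, ih, map_smul, S.rep_a, update_self,
      update_idem, smul_smul, ← Complex.ofReal_mul, ← Real.sqrt_mul (by positivity),
      Nat.descFactorial_succ, Nat.sub_sub]
    push_cast
    ring_nf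

lemma rep_amon_eVec (t m : Fin n → ℕ) :
    S.rep (W.amon t) (eVec m) =
      (∏ i, (√((m i).descFactorial (t i) : ℝ) : ℂ)) • eVec (fun i => m i - t i) := by
  rw [WeylAlgebra.amon, map_list_prod, List.ofFn_eq_map, List.map_map]
  exact list_prod_map_apply_eVec_of_mem _ (fun i k => (√(k.descFactorial (t i) : ℝ) : ℂ))
    (fun i k => k - t i) (fun i m => S.rep_pow_eVec i (t i) m) (List.nodup_finRange n)
    (List.mem_finRange) m

lemma rep_star_amon_eVec (t m : Fin n → ℕ) :
    S.rep (star (W.amon t)) (eVec m) =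
      (∏ i, (√((m i + 1).ascFactorial (t i) : ℝ) : ℂ)) • eVec (fun i => m i + t i) := by
  have hstar :
      star (W.amon t) = ((List.finRange n).reverse.map fun i => star (W.a i) ^ t i).prod := by
    rw [WeylAlgebra.amon, ← MulOpposite.unop_op (star _)]
    change (starMulEquiv _).unop = _
    rw [unop_map_list_prod, List.ofFn_eq_map, List.map_map, List.map_reverse]
    simp [Function.comp_def, star_pow]
  rw [hstar, map_list_prod, List.map_map]
  exact list_prod_map_apply_eVec_of_mem _ (fun i k => (√((k + 1).ascFactorial (t i) : ℝ) : ℂ))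
    (fun i k => k + t i) (fun i m => S.rep_star_pow_eVec i (t i) m)
    (List.nodup_reverse.mpr (List.nodup_finRange n)) (by simp) m

end Schrodinger

section Combinatorics

open Nat

variable {n : ℕ}

def ascFactorialProd (m t : Fin n → ℕ) : ℕ := ∏ i, (m i + 1).ascFactorial (t i)

lemma ascFactorialProd_le (m t : Fin n → ℕ) :
    ascFactorialProd m t ≤ (∑ i, t i)! * (∑ i, t i + 1).ascFactorial (∑ i, m i) := by
  have hprod : ascFactorialProd m t * ∏ i, (m i)! = ∏ i, (m i + t i)! := by
    rw [ascFactorialProd, ← prod_mul_distrib]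
    exact prod_congr rfl fun i _ => by rw [mul_comm, factorial_mul_ascFactorial]
  calc ascFactorialProd m t ≤ ascFactorialProd m t * ∏ i, (m i)! :=
        Nat.le_mul_of_pos_right _ (prod_factorial_pos _ _)
    _ = ∏ i, (m i + t i)! := hprod
    _ ≤ (∑ i, (m i + t i))! :=
        Nat.le_of_dvd (factorial_pos _) (prod_factorial_dvd_factorial_sum _ _)
    _ = _ := by rw [sum_add_distrib, add_comm, factorial_mul_ascFactorial]

lemma pow_mul_ascFactorial_le (k M : ℕ) :
    (k + 1) ^ n * (k + 1).ascFactorial M ≤ (k + 1).ascFactorial (M + n) := by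
  rw [← ascFactorial_mul_ascFactorial, mul_comm]
  gcongr
  calc (k + 1) ^ n ≤ (k + 1 + M) ^ n := Nat.pow_le_pow_left (by omega) n
    _ ≤ (k + 1 + M).ascFactorial n := pow_succ_le_ascFactorial _ n

def multiIndices (n r : ℕ) : Finset (Fin n → ℕ) :=
  (Fintype.piFinset fun _ : Fin n => range (r + 1)).filter fun t => ∑ i, t i ≤ r

lemma card_multiIndices_filter_sum_eq_le (r k : ℕ) :
    #{t ∈ multiIndices n r | ∑ i, t i = k} ≤ (k + 1) ^ n := by
  calc #{t ∈ multiIndices n r | ∑ i, t i = k}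
      ≤ #(Fintype.piFinset fun _ : Fin n => range (k + 1)) := by
        refine card_le_card fun t ht => Fintype.mem_piFinset.mpr fun i => ?_
        rw [mem_range, Nat.lt_succ_iff, ← (mem_filter.mp ht).2]
        exact single_le_sum (fun _ _ => Nat.zero_le _) (mem_univ i)
    _ = (k + 1) ^ n := by simp

end Combinatorics

lemma summable_ascFactorial_mul_geometric_of_norm_lt_one {R : Type*} [NormedRing R]
    [HasSummableGeomSeries R] (d : ℕ) {r : R} (hr : ‖r‖ < 1) :
    Summable fun k : ℕ => ((k + 1).ascFactorial d : R) * r ^ k := by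
  simpa [Nat.add_descFactorial_eq_ascFactorial] using
    summable_descFactorial_mul_geometric_of_norm_lt_one d hr

section Eigenvalue

open Nat

variable {n : ℕ}

def gCoeff (n : ℕ) (c : ℝ) (k : ℕ) : ℝ := (n - 1)! / (c ^ k * (n + k - 1)!)

lemma gCoeff_nonneg {c : ℝ} (hc : 0 ≤ c) (k : ℕ) : 0 ≤ gCoeff n c k := by
  unfold gCoeff; positivity

lemma gCoeff_mul_factorial_le (hn : 1 ≤ n) {c : ℝ} (hc : 0 < c) (k : ℕ) :
    gCoeff n c k * k ! ≤ c⁻¹ ^ k := by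
  have hfact : ((n - 1)! * k ! : ℝ) ≤ (n + k - 1)! := by
    have hdvd := factorial_mul_factorial_dvd_factorial_add (n - 1) k
    rw [show n - 1 + k = n + k - 1 by omega] at hdvd
    exact_mod_cast Nat.le_of_dvd (factorial_pos _) hdvd
  calc gCoeff n c k * k ! = ((n - 1)! * k !) / (c ^ k * (n + k - 1)!) := by
        rw [gCoeff]; ring
    _ ≤ (n + k - 1)! / (c ^ k * (n + k - 1)!) := by gcongr
    _ = c⁻¹ ^ k := by rw [inv_pow]; field_simp

lemma gCoeff_mul_ascFactorialProd_le (hn : 1 ≤ n) {c : ℝ} (hc : 0 < c) (m t : Fin n → ℕ) :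
    gCoeff n c (∑ i, t i) * ascFactorialProd m t ≤
      (∑ i, t i + 1).ascFactorial (∑ i, m i) * c⁻¹ ^ (∑ i, t i) := by
  set k := ∑ i, t i
  calc gCoeff n c k * ascFactorialProd m t
      ≤ gCoeff n c k * (k ! * (k + 1).ascFactorial (∑ i, m i) : ℕ) := by
        gcongr
        · exact gCoeff_nonneg hc.le k
        · exact ascFactorialProd_le m t
    _ = (gCoeff n c k * k !) * (k + 1).ascFactorial (∑ i, m i) := by push_cast; ring
    _ ≤ c⁻¹ ^ k * (k + 1).ascFactorial (∑ i, m i) := by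
        gcongr
        exact gCoeff_mul_factorial_le hn hc k
    _ = _ := mul_comm _ _

def gEigenvalue (n : ℕ) (c : ℝ) (r : ℕ) (m : Fin n → ℕ) : ℝ :=
  ∑ t ∈ multiIndices n r, gCoeff n c (∑ i, t i) * ascFactorialProd m t

def gEigenvalueBound (n : ℕ) (c : ℝ) (M : ℕ) : ℝ :=
  ∑' k : ℕ, ((k + 1).ascFactorial (M + n) : ℝ) * c⁻¹ ^ k

lemma gEigenvalue_nonneg {c : ℝ} (hc : 0 ≤ c) (r : ℕ) (m : Fin n → ℕ) :
    0 ≤ gEigenvalue n c r m :=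
  sum_nonneg fun _ _ => mul_nonneg (gCoeff_nonneg hc _) (Nat.cast_nonneg _)

lemma gEigenvalueBound_nonneg {c : ℝ} (hc : 0 ≤ c) (M : ℕ) : 0 ≤ gEigenvalueBound n c M :=
  tsum_nonneg fun _ => by positivity

lemma gEigenvalue_le_bound (hn : 1 ≤ n) {c : ℝ} (hc : 1 < c) (r : ℕ) (m : Fin n → ℕ) :
    gEigenvalue n c r m ≤ gEigenvalueBound n c (∑ i, m i) := by
  set M := ∑ i, m i
  have hc₀ : 0 < c := zero_lt_one.trans hc
  have hsummable := summable_ascFactorial_mul_geometric_of_norm_lt_one (M + n)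
    (r := c⁻¹) (by rw [norm_inv, Real.norm_of_nonneg hc₀.le]; exact inv_lt_one_of_one_lt₀ hc)
  calc gEigenvalue n c r m
      ≤ ∑ t ∈ multiIndices n r, ((∑ i, t i + 1).ascFactorial M : ℝ) * c⁻¹ ^ (∑ i, t i) :=
        sum_le_sum fun t _ => gCoeff_mul_ascFactorialProd_le hn hc₀ m t
    _ = ∑ k ∈ (multiIndices n r).image (fun t => ∑ i, t i),
          #{t ∈ multiIndices n r | ∑ i, t i = k} • (((k + 1).ascFactorial M : ℝ) * c⁻¹ ^ k) :=
        sum_comp (fun k => ((k + 1).ascFactorial M : ℝ) * c⁻¹ ^ k) _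
    _ ≤ ∑ k ∈ (multiIndices n r).image (fun t => ∑ i, t i),
          ((k + 1).ascFactorial (M + n) : ℝ) * c⁻¹ ^ k := by
        refine sum_le_sum fun k _ => ?_
        rw [nsmul_eq_mul, ← mul_assoc]
        gcongr
        exact_mod_cast (Nat.mul_le_mul_right _ (card_multiIndices_filter_sum_eq_le r k)).trans
          (pow_mul_ascFactorial_le k M)
    _ ≤ gEigenvalueBound n c M := hsummable.sum_le_tsum _ fun _ _ => by positivity

end Eigenvalue

namespace Schrodinger

variable {n : ℕ} {W : WeylAlgebra n} (S : Schrodinger W)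

lemma rep_amon_mul_star_amon_eVec (t m : Fin n → ℕ) :
    S.rep (W.amon t * star (W.amon t)) (eVec m) = ((ascFactorialProd m t : ℝ) : ℂ) • eVec m := by
  rw [map_mul, Module.End.mul_apply, rep_star_amon_eVec, map_smul, rep_amon_eVec, smul_smul]
  simp only [Nat.add_sub_cancel, Nat.add_descFactorial_eq_ascFactorial, ← prod_mul_distrib,
    ← Complex.ofReal_mul, Real.mul_self_sqrt (Nat.cast_nonneg _), ascFactorialProd]
  push_cast
  rfl

lemma rep_gpoly_eVec (c : ℝ) (r : ℕ) (m : Fin n → ℕ) :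
    S.rep (W.gpoly c r) (eVec m) = (gEigenvalue n c r m : ℂ) • eVec m := by
  rw [WeylAlgebra.gpoly, map_sum, LinearMap.sum_apply]
  simp only [map_smul, LinearMap.smul_apply, rep_amon_mul_star_amon_eVec, smul_smul, ← sum_smul]
  push_cast [gEigenvalue, gCoeff]
  rfl

lemma energySet_nonempty (x : W.carrier) : (S.energySet x).Nonempty :=
  ⟨_, eVec 0, innerD_eVec_self 0, rfl⟩

lemma lambdaInf_le_energy {x : W.carrier} (hx : BddBelow (S.energySet x)) {φ : DSpace n}
    (hφ : innerD φ φ = 1) : S.lambdaInf x ≤ (innerD φ (S.rep x φ)).re :=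
  csInf_le hx ⟨φ, hφ, rfl⟩

lemma bddBelow_energySet_of_le {x : W.carrier} {b : ℝ}
    (h : ∀ φ, innerD φ φ = 1 → b ≤ (innerD φ (S.rep x φ)).re) : BddBelow (S.energySet x) :=
  ⟨b, by rintro _ ⟨φ, hφ, rfl⟩; exact h φ hφ⟩

lemma le_lambdaInf_of_le {x : W.carrier} {b : ℝ}
    (h : ∀ φ, innerD φ φ = 1 → b ≤ (innerD φ (S.rep x φ)).re) : b ≤ S.lambdaInf x :=
  le_csInf (S.energySet_nonempty x) (by rintro _ ⟨φ, hφ, rfl⟩; exact h φ hφ)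

lemma energy_add_smul (x y : W.carrier) (ε : ℝ) (φ : DSpace n) :
    (innerD φ (S.rep (x + (ε : ℂ) • y) φ)).re =
      (innerD φ (S.rep x φ)).re + ε * (innerD φ (S.rep y φ)).re := by
  rw [map_add, map_smul, LinearMap.add_apply, LinearMap.smul_apply, innerD_add_right,
    innerD_smul_right, Complex.add_re, Complex.re_ofReal_mul]

lemma energy_gpoly (c : ℝ) (r : ℕ) (φ : DSpace n) :
    (innerD φ (S.rep (W.gpoly c r) φ)).re =
      ∑ m ∈ φ.support, gEigenvalue n c r m * Complex.normSq (φ m) :=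
  innerD_re_of_apply_eVec (S.rep_gpoly_eVec c r) φ

lemma energy_gpoly_nonneg {c : ℝ} (hc : 0 ≤ c) (r : ℕ) (φ : DSpace n) :
    0 ≤ (innerD φ (S.rep (W.gpoly c r) φ)).re := by
  rw [energy_gpoly]
  exact sum_nonneg fun m _ => mul_nonneg (gEigenvalue_nonneg hc r m) (Complex.normSq_nonneg _)

lemma energy_gpoly_le (hn : 1 ≤ n) {c : ℝ} (hc : 1 < c) (r : ℕ) (φ : DSpace n) :
    (innerD φ (S.rep (W.gpoly c r) φ)).re ≤
      ∑ m ∈ φ.support, gEigenvalueBound n c (∑ i, m i) * Complex.normSq (φ m) := by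
  rw [energy_gpoly]
  exact sum_le_sum fun m _ =>
    mul_le_mul_of_nonneg_right (gEigenvalue_le_bound hn hc r m) (Complex.normSq_nonneg _)

end Schrodinger

theorem lambdaInf_perturbation_general {n : ℕ} (hn : 1 ≤ n) (c : ℝ) (hc : 2 < c)
    (W : WeylAlgebra n) (S : Schrodinger W) (p : W.carrier)
    (hbdd : BddBelow (S.energySet p)) :
    ∀ δ > (0 : ℝ), ∃ q : ℝ, 0 < q ∧ ∀ (r : ℕ) (ε : ℝ), 0 < ε →
      S.lambdaInf p ≤ S.lambdaInf (p + (ε : ℂ) • W.gpoly c r) ∧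
      S.lambdaInf (p + (ε : ℂ) • W.gpoly c r) ≤ S.lambdaInf p + δ + ε * q := by
  intro δ hδ
  have hc₀ : 0 ≤ c := by linarith
  have hc₁ : 1 < c := by linarith
  obtain ⟨_, ⟨φ, hφ, rfl⟩, hφδ⟩ :=
    exists_lt_of_csInf_lt (S.energySet_nonempty p) (lt_add_of_pos_right (S.lambdaInf p) hδ)
  set q := 1 + ∑ m ∈ φ.support, gEigenvalueBound n c (∑ i, m i) * Complex.normSq (φ m)
  have hq : 0 < q := add_pos_of_pos_of_nonneg one_pos <| sum_nonneg fun m _ =>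
    mul_nonneg (gEigenvalueBound_nonneg hc₀ _) (Complex.normSq_nonneg _)
  refine ⟨q, hq, fun r ε hε => ?_⟩
  have hlow : ∀ ψ, innerD ψ ψ = 1 →
      S.lambdaInf p ≤ (innerD ψ (S.rep (p + (ε : ℂ) • W.gpoly c r) ψ)).re := fun ψ hψ => by
    rw [S.energy_add_smul]
    linarith [S.lambdaInf_le_energy hbdd hψ, mul_nonneg hε.le (S.energy_gpoly_nonneg hc₀ r ψ)]
  refine ⟨S.le_lambdaInf_of_le hlow, ?_⟩
  calc S.lambdaInf (p + (ε : ℂ) • W.gpoly c r)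
      ≤ (innerD φ (S.rep (p + (ε : ℂ) • W.gpoly c r) φ)).re :=
        S.lambdaInf_le_energy (S.bddBelow_energySet_of_le hlow) hφ
    _ = (innerD φ (S.rep p φ)).re + ε * (innerD φ (S.rep (W.gpoly c r) φ)).re :=
        S.energy_add_smul _ _ _ _
    _ ≤ S.lambdaInf p + δ + ε * q := by
        gcongr
        exact (S.energy_gpoly_le hn hc₁ r φ).trans (le_add_of_nonneg_left zero_le_one)

/-- For hermitian `p` with `λ_inf(p) > -∞` and fixed `c > 2`:
for every `δ > 0` there is `q > 0` such that for all `r` and all `ε > 0`,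
`λ_inf(p) ≤ λ_inf(p + ε·g^r_c) ≤ λ_inf(p) + δ + ε·q`. -/
theorem lambdaInf_perturbation {n : ℕ} (hn : 1 ≤ n) (c : ℝ) (hc : 2 < c)
    (W : WeylAlgebra n) (S : Schrodinger W) (p : W.carrier) (hherm : star p = p)
    (hbdd : BddBelow (S.energySet p)) :
    ∀ δ > (0 : ℝ), ∃ q : ℝ, 0 < q ∧ ∀ (r : ℕ) (ε : ℝ), 0 < ε →
      S.lambdaInf p ≤ S.lambdaInf (p + (ε : ℂ) • W.gpoly c r) ∧
      S.lambdaInf (p + (ε : ℂ) • W.gpoly c r) ≤ S.lambdaInf p + δ + ε * q :=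
  lambdaInf_perturbation_general hn c hc W S p hbdd
end
end

section
/- Let n ≥ 1 and let s ∈ W_n be any monomial (word in the letters a_1,…,a_n, a_1*,…,a_n*). Then ‡ s s* ‡ − s s* ∈ Σ², where ‡ s s* ‡ denotes the anti-normal ordering of the monomial s s*. -/
open scoped ComplexOrder

noncomputable section

/-!
Induct on the word. Prepending `a_i` to `s` conjugates both `‡ s s* ‡` and `s s*` by `a_i`, and
conjugation preserves `Σ²`. Prepending `a_i*` conjugates `s s*` by `a_i*` instead, so one needs
`a_i x a_i* - a_i* x a_i ∈ Σ²` for `x = a^t (a^t)*`. Only the `i`-th mode matters, and for one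
mode the CCR give `a P_q a* - a* P_q a = (2q+1) P_q + q² P_{q-1}` for `P_q = (a*)^q a^q`, so the
cone spanned by the `P_q` (which are squares) contains `a^k (a*)^k` and is stable under this map.
-/

def starSumSq (R : Type*) [NonUnitalNonAssocSemiring R] [Star R] : AddSubmonoid R :=
  AddSubmonoid.closure (Set.range fun s : R => star s * s)

section CCR

variable {R : Type*} [Ring R] [StarRing R] {a : R}

lemma mul_mul_star_mem_starSumSq {x : R} (hx : x ∈ starSumSq R) (c : R) :
    c * x * star c ∈ starSumSq R := by
  induction hx using AddSubmonoid.closure_induction with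
  | mem x hx =>
    obtain ⟨s, rfl⟩ := hx
    exact AddSubmonoid.subset_closure ⟨s * star c, by simp only [star_mul, star_star, mul_assoc]⟩
  | zero => simp
  | add x y _ _ hx hy => simpa only [mul_add, add_mul] using add_mem hx hy

def conjDiff (a : R) : R →+ R :=
  AddMonoidHom.mk' (fun x => a * x * star a - star a * x * a) fun x y => by noncomm_ring

lemma conjDiff_apply (x : R) : conjDiff a x = a * x * star a - star a * x * a := rfl

lemma conjDiff_conj_of_commute {y : R} (hya : Commute y a) (hyb : Commute y (star a)) (x : R) :
    conjDiff a (y * x * star y) = y * conjDiff a x * star y := by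
  have hya' : Commute (star y) (star a) := hya.star_star
  have hyb' : Commute (star y) a := by simpa using hyb.star_star
  simp only [conjDiff_apply, mul_sub, sub_mul]
  congr 1
  · rw [← mul_assoc a, ← mul_assoc a, ← hya.eq, mul_assoc _ (star y), hya'.eq]
    simp only [mul_assoc]
  · rw [← mul_assoc (star a), ← mul_assoc (star a), ← hyb.eq, mul_assoc _ (star y), hyb'.eq]
    simp only [mul_assoc]

lemma mul_star_pow_succ (h : a * star a - star a * a = 1) (q : ℕ) :
    a * star a ^ (q + 1) = star a ^ (q + 1) * a + (q + 1) • star a ^ q := by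
  induction q with
  | zero => simpa [sub_eq_iff_eq_add'] using h
  | succ q ih =>
    calc a * star a ^ (q + 2) = (a * star a ^ (q + 1)) * star a := by
          rw [pow_succ _ (q + 1), mul_assoc]
      _ = star a ^ (q + 1) * (a * star a - star a * a) + star a ^ (q + 2) * a
            + (q + 1) • star a ^ (q + 1) := by
          rw [ih]
          simp only [pow_succ, mul_sub, add_mul, mul_assoc, smul_mul_assoc]
          abel
      _ = star a ^ (q + 2) * a + (q + 2) • star a ^ (q + 1) := by
          rw [h, mul_one]
          module

lemma pow_succ_mul_star (h : a * star a - star a * a = 1) (q : ℕ) :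
    a ^ (q + 1) * star a = star a * a ^ (q + 1) + (q + 1) • a ^ q := by
  have := congrArg star (mul_star_pow_succ h q)
  simpa only [star_mul, star_add, star_pow, star_star, star_nsmul] using this

def normalPowCone (a : R) : AddSubmonoid R :=
  AddSubmonoid.closure (Set.range fun q : ℕ => star a ^ q * a ^ q)

lemma normalPowCone_le_starSumSq (a : R) : normalPowCone a ≤ starSumSq R :=
  AddSubmonoid.closure_le.mpr <| by
    rintro _ ⟨q, rfl⟩
    exact AddSubmonoid.subset_closure ⟨a ^ q, by simp only [star_pow]⟩

lemma normalPow_mem_normalPowCone (a : R) (q : ℕ) : star a ^ q * a ^ q ∈ normalPowCone a :=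
  AddSubmonoid.subset_closure ⟨q, rfl⟩

lemma map_mem_normalPowCone {f : R →+ R} (hf : ∀ q, f (star a ^ q * a ^ q) ∈ normalPowCone a)
    {x : R} (hx : x ∈ normalPowCone a) : f x ∈ normalPowCone a := by
  refine (AddSubmonoid.closure_le (S := (normalPowCone a).comap f)).mpr ?_ hx
  rintro _ ⟨q, rfl⟩
  exact hf q

lemma star_mul_mul_mem_normalPowCone {x : R} (hx : x ∈ normalPowCone a) :
    star a * x * a ∈ normalPowCone a := by
  refine map_mem_normalPowCone (f := AddMonoidHom.mk' (fun x => star a * x * a)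
    fun x y => by noncomm_ring) (fun q => ?_) hx
  convert normalPow_mem_normalPowCone a (q + 1) using 1
  rw [pow_succ' (star a), pow_succ a, AddMonoidHom.mk'_apply]
  simp only [mul_assoc]

lemma conjDiff_normalPow_succ (h : a * star a - star a * a = 1) (q : ℕ) :
    conjDiff a (star a ^ (q + 1) * a ^ (q + 1))
      = (2 * q + 3) • (star a ^ (q + 1) * a ^ (q + 1)) + (q + 1) ^ 2 • (star a ^ q * a ^ q) := by
  calc conjDiff a (star a ^ (q + 1) * a ^ (q + 1))
      = (a * star a ^ (q + 1)) * (a ^ (q + 1) * star a)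
          - star a ^ (q + 1) * (star a * (a * a ^ (q + 1))) := by
        simp only [conjDiff_apply, mul_assoc]
        rw [(Commute.pow_self a (q + 1)).eq, (Commute.self_pow (star a) (q + 1)).left_comm]
    _ = (2 * q + 3) • (star a ^ q * star a * (a * a ^ q)) + (q + 1) ^ 2 • (star a ^ q * a ^ q)
          + star a ^ q * star a * (a * star a - star a * a - 1) * (a * a ^ q) := by
        rw [mul_star_pow_succ h, pow_succ_mul_star h, pow_succ (star a) q, pow_succ' a q]
        simp only [mul_add, add_mul, mul_sub, sub_mul, smul_mul_assoc, mul_smul_comm, mul_assoc,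
          mul_one]
        module
    _ = _ := by rw [h, sub_self, mul_zero, zero_mul, add_zero, ← pow_succ, ← pow_succ']

lemma conjDiff_mem_normalPowCone (h : a * star a - star a * a = 1) {x : R}
    (hx : x ∈ normalPowCone a) : conjDiff a x ∈ normalPowCone a := by
  refine map_mem_normalPowCone (fun q => ?_) hx
  cases q with
  | zero => simpa [conjDiff_apply, h] using normalPow_mem_normalPowCone a 0
  | succ q =>
    rw [conjDiff_normalPow_succ h]
    exact add_mem (nsmul_mem (normalPow_mem_normalPowCone a _) _)
      (nsmul_mem (normalPow_mem_normalPowCone a _) _)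

lemma mul_mul_star_mem_normalPowCone (h : a * star a - star a * a = 1) {x : R}
    (hx : x ∈ normalPowCone a) : a * x * star a ∈ normalPowCone a := by
  have hsplit : a * x * star a = star a * x * a + conjDiff a x := by
    rw [conjDiff_apply, add_sub_cancel]
  rw [hsplit]
  exact add_mem (star_mul_mul_mem_normalPowCone hx) (conjDiff_mem_normalPowCone h hx)

lemma pow_mul_star_pow_mem_normalPowCone (h : a * star a - star a * a = 1) (k : ℕ) :
    a ^ k * star a ^ k ∈ normalPowCone a := by
  induction k with
  | zero => simpa using normalPow_mem_normalPowCone a 0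
  | succ k ih =>
    rw [pow_succ' a, pow_succ (star a)]
    simpa only [mul_assoc] using mul_mul_star_mem_normalPowCone h ih

lemma conjDiff_conj_pow_mem_starSumSq (h : a * star a - star a * a = 1) {y : R}
    (hya : Commute y a) (hyb : Commute y (star a)) (k : ℕ) :
    conjDiff a (y * (a ^ k * star a ^ k) * star y) ∈ starSumSq R := by
  rw [conjDiff_conj_of_commute hya hyb]
  exact mul_mul_star_mem_starSumSq (normalPowCone_le_starSumSq a
    (conjDiff_mem_normalPowCone h (pow_mul_star_pow_mem_normalPowCone h k))) y

end CCR

-- `List.count` in the statement uses the derived `BEq` on `Sum`, which is not known to be lawful.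
instance Sum.instLawfulBEq {α β : Type*} [BEq α] [BEq β] [LawfulBEq α] [LawfulBEq β] :
    LawfulBEq (α ⊕ β) where
  rfl {x} := by
    cases x with
    | inl a => exact beq_self_eq_true a
    | inr b => exact beq_self_eq_true b
  eq_of_beq {x y} h := by
    cases x <;> cases y <;> first
      | exact congrArg _ (eq_of_beq h)
      | exact absurd h Bool.false_ne_true

def letterCount {n : ℕ} (w : List (Fin n ⊕ Fin n)) (i : Fin n) : ℕ :=
  w.count (Sum.inl i) + w.count (Sum.inr i)

@[simp]
lemma letterCount_nil {n : ℕ} : letterCount ([] : List (Fin n ⊕ Fin n)) = 0 := by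
  funext i
  simp [letterCount]

lemma letterCount_cons {n : ℕ} (ℓ : Fin n ⊕ Fin n) (w : List (Fin n ⊕ Fin n)) :
    letterCount (ℓ :: w) = letterCount w + Pi.single (ℓ.elim id id) 1 := by
  funext j
  rcases ℓ with i | i <;> by_cases h : j = i <;> simp [letterCount, h, eq_comm] <;> ring

namespace WeylAlgebra

variable {n : ℕ} (W : WeylAlgebra n)

open scoped IsMulCommutative

abbrev annihilators : Submonoid W.carrier := Submonoid.closure (Set.range W.a)

instance : IsMulCommutative W.annihilators :=
  Submonoid.isMulCommutative_closure _ <| by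
    rintro _ ⟨i, rfl⟩ _ ⟨j, rfl⟩
    exact W.comm_aa i j

def annihilator (i : Fin n) : W.annihilators := ⟨W.a i, Submonoid.subset_closure ⟨i, rfl⟩⟩

lemma amon_eq_coe_prod (t : Fin n → ℕ) : W.amon t = ↑(∏ i, W.annihilator i ^ t i) := by
  rw [amon, ← List.prod_ofFn, SubmonoidClass.coe_list_prod, List.map_ofFn]
  simp only [Function.comp_def, SubmonoidClass.coe_pow]
  rfl

lemma amon_zero : W.amon 0 = 1 := by
  simp [amon_eq_coe_prod]

lemma amon_add (s t : Fin n → ℕ) : W.amon (s + t) = W.amon s * W.amon t := by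
  simp only [amon_eq_coe_prod, Pi.add_apply, pow_add, Finset.prod_mul_distrib, Submonoid.coe_mul]

lemma amon_single (i : Fin n) (k : ℕ) : W.amon (Pi.single i k) = W.a i ^ k := by
  rw [amon_eq_coe_prod, Fintype.prod_eq_single i fun j hj => by simp [hj]]
  simp [annihilator]

lemma amon_eq_mul_pow (t : Fin n → ℕ) (i : Fin n) :
    W.amon t = W.amon (Function.update t i 0) * W.a i ^ t i := by
  rw [← amon_single, ← amon_add]
  congr 1
  funext j
  by_cases h : j = i <;> simp [h]

lemma commute_amon_a (t : Fin n → ℕ) (i : Fin n) : Commute (W.amon t) (W.a i) := by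
  rw [amon_eq_coe_prod]
  exact congrArg Subtype.val (mul_comm _ (W.annihilator i))

lemma commute_amon_star_a {t : Fin n → ℕ} {i : Fin n} (ht : t i = 0) :
    Commute (W.amon t) (star (W.a i)) := by
  refine Commute.list_prod_left _ _ fun x hx => ?_
  obtain ⟨j, rfl⟩ := List.mem_ofFn.mp hx
  by_cases h : j = i
  · subst h
    simp [ht]
  · have := W.ccr j i
    rw [if_neg h, sub_eq_zero] at this
    exact Commute.pow_left this _

lemma conjDiff_amon_mem_starSumSq (t : Fin n → ℕ) (i : Fin n) :
    conjDiff (W.a i) (W.amon t * star (W.amon t)) ∈ starSumSq W.carrier := by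
  rw [W.amon_eq_mul_pow t i, star_mul, star_pow]
  simpa only [mul_assoc] using conjDiff_conj_pow_mem_starSumSq (by simpa using W.ccr i i)
    (W.commute_amon_a _ i) (W.commute_amon_star_a (Function.update_self i 0 t)) (t i)

lemma isSOS_of_mem_starSumSq {p : W.carrier} (hp : p ∈ starSumSq W.carrier) : W.IsSOS p := by
  induction hp using AddSubmonoid.closure_induction with
  | mem x hx =>
    obtain ⟨f, rfl⟩ := hx
    exact ⟨1, fun _ => f, by simp⟩
  | zero => exact ⟨0, Fin.elim0, by simp⟩
  | add x y _ _ hx hy =>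
    obtain ⟨N, f, rfl⟩ := hx
    obtain ⟨M, g, rfl⟩ := hy
    exact ⟨N + M, Fin.append f g, by simp [Fin.sum_univ_add]⟩

lemma wordVal_cons (ℓ : Fin n ⊕ Fin n) (w : List (Fin n ⊕ Fin n)) :
    W.wordVal (ℓ :: w) = W.letterVal ℓ * W.wordVal w := by
  simp [wordVal]

lemma amon_letterCount_cons (ℓ : Fin n ⊕ Fin n) (w : List (Fin n ⊕ Fin n)) :
    W.amon (letterCount (ℓ :: w)) = W.a (ℓ.elim id id) * W.amon (letterCount w) := by
  rw [letterCount_cons, amon_add, amon_single, pow_one, (W.commute_amon_a _ _).eq]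

lemma amon_letterCount_sub_wordVal_mem_starSumSq (w : List (Fin n ⊕ Fin n)) :
    W.amon (letterCount w) * star (W.amon (letterCount w)) - W.wordVal w * star (W.wordVal w)
      ∈ starSumSq W.carrier := by
  induction w with
  | nil => simp [wordVal, amon_zero]
  | cons ℓ w ih =>
    rw [amon_letterCount_cons, wordVal_cons]
    set M := W.amon (letterCount w)
    set U := W.wordVal w
    cases ℓ with
    | inl i =>
      have hsplit : W.a i * M * star (W.a i * M) - W.a i * U * star (W.a i * U)
          = W.a i * (M * star M - U * star U) * star (W.a i) := by
        simp only [star_mul]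
        noncomm_ring
      simpa only [Sum.elim_inl, id, letterVal, hsplit] using mul_mul_star_mem_starSumSq ih (W.a i)
    | inr i =>
      have hsplit : W.a i * M * star (W.a i * M) - star (W.a i) * U * star (star (W.a i) * U)
          = conjDiff (W.a i) (M * star M)
            + star (W.a i) * (M * star M - U * star U) * star (star (W.a i)) := by
        simp only [conjDiff_apply, star_mul, star_star]
        noncomm_ring
      simpa only [Sum.elim_inr, id, letterVal, hsplit] using
        add_mem (W.conjDiff_amon_mem_starSumSq _ i) (mul_mul_star_mem_starSumSq ih (star (W.a i)))

end WeylAlgebra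

/-- `‡ s s* ‡` is encoded as `a^t (a^t)*`, where `t i` counts the letters `a_i, a_i*` in `w`. -/
theorem antinormal_minus_word_sos_general {n : ℕ} (W : WeylAlgebra n)
    (w : List (Fin n ⊕ Fin n)) :
    W.IsSOS
      (W.amon (fun i => w.count (Sum.inl i) + w.count (Sum.inr i)) *
        star (W.amon (fun i => w.count (Sum.inl i) + w.count (Sum.inr i))) -
       W.wordVal w * star (W.wordVal w)) :=
  W.isSOS_of_mem_starSumSq (W.amon_letterCount_sub_wordVal_mem_starSumSq w)

/-- For any monomial `s` (a word `w` in the letters `a_i, a_i*`),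
`‡ s s* ‡ − s s* ∈ Σ²`, where the anti-normal ordering `‡ s s* ‡` equals
`a^t (a^t)*` with `t i` the total number of occurrences of the letters `a_i, a_i*`
in `w`. -/
theorem antinormal_minus_word_sos {n : ℕ} (hn : 1 ≤ n) (W : WeylAlgebra n)
    (w : List (Fin n ⊕ Fin n)) :
    W.IsSOS
      (W.amon (fun i => w.count (Sum.inl i) + w.count (Sum.inr i)) *
        star (W.amon (fun i => w.count (Sum.inl i) + w.count (Sum.inr i))) -
       W.wordVal w * star (W.wordVal w)) :=
  antinormal_minus_word_sos_general W w
end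
end

section
/- In the Weyl algebra W_1 with generator a and adjoint a*, for every k ∈ ℕ the element a^{k+1}(a*)^{k+1} − a*·a^k (a*)^k·a belongs to Σ². Moreover, a^{k+1}(a*)^{k+1} − a*·a^k (a*)^k·a = (k+1)·a^k(a*)^k + k·a^{k−1}(a*)^k a. -/
open scoped ComplexOrder

noncomputable section

/-!
Write `x = a` and `y = a*`, so that `x * y = y * x + 1`. Then `x` acts on powers of `y` like a
derivative, `x * y ^ n = y ^ n * x + n • y ^ (n - 1)`, and dually `y * x ^ n = x ^ n * y -
n • x ^ (n - 1)`; moving the outer `x` and `y` across the middle factor gives the identity.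
Both terms on its right are sums of squares: `a^k (a*)^k = star ((a*)^k) * (a*)^k`, and every
`x ^ m * y ^ (m + j) * x ^ j` is one, by induction on `m`, since commuting the leftmost `x`
through `y ^ (m + j + 1)` writes it as a sum of two terms of the same shape with smaller `m`.
-/

section CommutatorEqOne

variable {R : Type*} [Ring R] {x y : R}

theorem mul_pow_succ_of_mul_sub_mul_eq_one (h : x * y - y * x = 1) (n : ℕ) :
    x * y ^ (n + 1) = y ^ (n + 1) * x + (n + 1) • y ^ n := by
  have hxy : x * y = y * x + 1 := sub_eq_iff_eq_add'.mp h
  induction n with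
  | zero => simpa using hxy
  | succ n ih =>
    rw [pow_succ y (n + 1), ← mul_assoc, ih, add_mul, mul_assoc, hxy, smul_mul_assoc,
      ← pow_succ, mul_add, mul_one, ← mul_assoc, ← pow_succ, succ_nsmul _ (n + 1)]
    abel

open MulOpposite in
theorem pow_succ_mul_of_mul_sub_mul_eq_one (h : x * y - y * x = 1) (n : ℕ) :
    x ^ (n + 1) * y = y * x ^ (n + 1) + (n + 1) • x ^ n := by
  have hop : op y * op x - op x * op y = 1 := by
    rw [← op_mul, ← op_mul, ← op_sub, h, op_one]
  simpa [← op_pow, ← op_mul, ← op_add, ← op_smul] using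
    mul_pow_succ_of_mul_sub_mul_eq_one hop n

theorem mul_pow_of_mul_sub_mul_eq_one (h : x * y - y * x = 1) (n : ℕ) :
    y * x ^ n = x ^ n * y - n • x ^ (n - 1) := by
  cases n with
  | zero => simp
  | succ n =>
    rw [pow_succ_mul_of_mul_sub_mul_eq_one h, Nat.add_sub_cancel, add_sub_cancel_right]

theorem pow_succ_mul_pow_add_mul_pow_of_mul_sub_mul_eq_one (h : x * y - y * x = 1) (m j : ℕ) :
    x ^ (m + 1) * y ^ (m + 1 + j) * x ^ j =
      x ^ m * y ^ (m + (j + 1)) * x ^ (j + 1) +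
        (m + j + 1) • (x ^ m * y ^ (m + j) * x ^ j) := by
  rw [show m + 1 + j = m + j + 1 by omega, show m + (j + 1) = m + j + 1 by omega,
    pow_succ x m, mul_assoc (x ^ m) x, mul_pow_succ_of_mul_sub_mul_eq_one h, pow_succ' x j]
  simp only [mul_add, add_mul, mul_assoc, mul_smul_comm, smul_mul_assoc]

theorem pow_succ_mul_pow_succ_sub_of_mul_sub_mul_eq_one (h : x * y - y * x = 1) (k : ℕ) :
    x ^ (k + 1) * y ^ (k + 1) - y * (x ^ k * y ^ k) * x =
      (k + 1) • (x ^ k * y ^ k) + k • (x ^ (k - 1) * y ^ k * x) := by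
  have outer :
      x ^ (k + 1) * y ^ (k + 1) = x ^ k * y ^ (k + 1) * x + (k + 1) • (x ^ k * y ^ k) := by
    rw [pow_succ x k, mul_assoc, mul_pow_succ_of_mul_sub_mul_eq_one h, mul_add, mul_smul_comm,
      mul_assoc]
  have inner :
      y * (x ^ k * y ^ k) * x = x ^ k * y ^ (k + 1) * x - k • (x ^ (k - 1) * y ^ k * x) := by
    rw [← mul_assoc, mul_pow_of_mul_sub_mul_eq_one h, pow_succ']
    simp only [sub_mul, smul_mul_assoc, mul_assoc]
  rw [outer, inner]
  abel

end CommutatorEqOne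

namespace WeylAlgebra

variable {n : ℕ} (W : WeylAlgebra n)

theorem a_mul_star_sub_star_mul_a (i : Fin n) :
    W.a i * star (W.a i) - star (W.a i) * W.a i = 1 := by
  simpa using W.ccr i i

theorem isSOS_zero : W.IsSOS 0 := ⟨0, finZeroElim, by simp⟩

theorem isSOS_star_mul_self (f : W.carrier) : W.IsSOS (star f * f) := ⟨1, fun _ => f, by simp⟩

variable {W} in
theorem IsSOS.add {p q : W.carrier} (hp : W.IsSOS p) (hq : W.IsSOS q) : W.IsSOS (p + q) := by
  obtain ⟨N, f, rfl⟩ := hp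
  obtain ⟨M, g, rfl⟩ := hq
  exact ⟨N + M, Fin.append f g, by simp [Fin.sum_univ_add]⟩

variable {W} in
theorem IsSOS.nsmul {p : W.carrier} (hp : W.IsSOS p) (m : ℕ) : W.IsSOS (m • p) := by
  induction m with
  | zero => simpa using W.isSOS_zero
  | succ m ih => rw [succ_nsmul]; exact ih.add hp

theorem isSOS_pow_mul_star_pow_mul_pow (i : Fin n) (m j : ℕ) :
    W.IsSOS (W.a i ^ m * star (W.a i) ^ (m + j) * W.a i ^ j) := by
  induction m generalizing j with
  | zero => simpa [star_pow] using W.isSOS_star_mul_self (W.a i ^ j)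
  | succ m ih =>
    rw [pow_succ_mul_pow_add_mul_pow_of_mul_sub_mul_eq_one (W.a_mul_star_sub_star_mul_a i)]
    exact (ih (j + 1)).add ((ih j).nsmul _)

end WeylAlgebra

/-- In `W₁`, `a^{k+1}(a*)^{k+1} − a*·a^k(a*)^k·a ∈ Σ²`, and moreover
`a^{k+1}(a*)^{k+1} − a*·a^k(a*)^k·a = (k+1)·a^k(a*)^k + k·a^{k-1}(a*)^k a`. -/
theorem weyl1_sandwich_sos (W : WeylAlgebra 1) (k : ℕ) :
    W.IsSOS (W.a 0 ^ (k + 1) * star (W.a 0) ^ (k + 1) -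
      star (W.a 0) * (W.a 0 ^ k * star (W.a 0) ^ k) * W.a 0) ∧
    W.a 0 ^ (k + 1) * star (W.a 0) ^ (k + 1) -
        star (W.a 0) * (W.a 0 ^ k * star (W.a 0) ^ k) * W.a 0 =
      (k + 1) • (W.a 0 ^ k * star (W.a 0) ^ k) +
        k • (W.a 0 ^ (k - 1) * star (W.a 0) ^ k * W.a 0) := by
  have identity :=
    pow_succ_mul_pow_succ_sub_of_mul_sub_mul_eq_one (W.a_mul_star_sub_star_mul_a 0) k
  have hsq : W.IsSOS (W.a 0 ^ k * star (W.a 0) ^ k) := by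
    simpa [star_pow] using W.isSOS_star_mul_self (star (W.a 0) ^ k)
  have hcross : W.IsSOS (k • (W.a 0 ^ (k - 1) * star (W.a 0) ^ k * W.a 0)) := by
    cases k with
    | zero => simpa using W.isSOS_zero
    | succ k => simpa using (W.isSOS_pow_mul_star_pow_mul_pow 0 k 1).nsmul (k + 1)
  exact ⟨identity ▸ (hsq.nsmul _).add hcross, identity⟩
end
end

section
/- In the Weyl algebra W_1, let s be any monomial (word in the letters a, a*) of length k. Then a^k (a*)^k − s s* ∈ Σ². -/
open scoped ComplexOrder

noncomputable section

/-!
Write `b = a*` and let `C` be the additive monoid generated by the normally ordered monomials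
`b^m a^m = (a^m)* a^m`, all of which are squares. From `a b - b a = 1` one computes
`a (b^m a^m) b - b (b^m a^m) a = (2m + 1) b^m a^m + m² b^(m-1) a^(m-1)`, so `x ↦ b x a` and
`x ↦ a x b - b x a`, hence also `x ↦ a x b`, map `C` into itself. By induction on the word,
`s s* ∈ C`; and for `s = l u` with `|u| = k`,
`a^(k+1) b^(k+1) - l u u* l* = a (a^k b^k - u u*) b + (a u u* b - l u u* l*)`,
where the first summand lies in `C` by induction and the second is `0` or `a x b - b x a`.
-/

def IsCCRPair {R : Type*} [Ring R] (a b : R) : Prop := a * b - b * a = 1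

def diagonalCone {R : Type*} [Ring R] (a b : R) : AddSubmonoid R :=
  AddSubmonoid.closure (Set.range fun m : ℕ => b ^ m * a ^ m)

section Ring

variable {R : Type*} [Ring R] {a b x : R}

lemma pow_mul_pow_mem_diagonalCone (m : ℕ) : b ^ m * a ^ m ∈ diagonalCone a b :=
  AddSubmonoid.subset_closure ⟨m, rfl⟩

lemma map_mem_diagonalCone {f : R →+ R} (hf : ∀ m, f (b ^ m * a ^ m) ∈ diagonalCone a b)
    (hx : x ∈ diagonalCone a b) : f x ∈ diagonalCone a b :=
  (AddSubmonoid.closure_le (S := (diagonalCone a b).comap f)).2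
    (Set.range_subset_iff.2 hf) hx

lemma mul_pow_mul_pow_mul (m : ℕ) :
    b * (b ^ m * a ^ m) * a = b ^ (m + 1) * a ^ (m + 1) := by
  rw [pow_succ', pow_succ, mul_assoc, mul_assoc, mul_assoc]

lemma mul_mul_mem_diagonalCone (hx : x ∈ diagonalCone a b) : b * x * a ∈ diagonalCone a b :=
  map_mem_diagonalCone (f := (AddMonoidHom.mulRight a).comp (AddMonoidHom.mulLeft b))
    (fun m => by simpa [mul_pow_mul_pow_mul] using pow_mul_pow_mem_diagonalCone (m + 1)) hx

namespace IsCCRPair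

lemma mul_eq (h : IsCCRPair a b) : a * b = b * a + 1 := sub_eq_iff_eq_add'.1 h

lemma mul_pow_succ (h : IsCCRPair a b) (m : ℕ) :
    a * b ^ (m + 1) = b ^ (m + 1) * a + (m + 1) • b ^ m := by
  induction m with
  | zero => simpa using h.mul_eq
  | succ m ih =>
    rw [pow_succ b (m + 1), ← mul_assoc, ih, add_mul, mul_assoc, h.mul_eq, mul_add, mul_one,
      ← mul_assoc, ← pow_succ, smul_mul_assoc, ← pow_succ]
    module

lemma pow_succ_mul (h : IsCCRPair a b) (m : ℕ) :
    a ^ (m + 1) * b = b * a ^ (m + 1) + (m + 1) • a ^ m := by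
  induction m with
  | zero => simpa using h.mul_eq
  | succ m ih =>
    rw [pow_succ' a (m + 1), mul_assoc, ih, mul_add, ← mul_assoc, h.mul_eq, add_mul, one_mul,
      mul_assoc, ← pow_succ', mul_smul_comm, ← pow_succ']
    module

lemma mul_pow_mul_pow_mul_sub (h : IsCCRPair a b) (m : ℕ) :
    a * (b ^ (m + 1) * a ^ (m + 1)) * b - b * (b ^ (m + 1) * a ^ (m + 1)) * a
      = (2 * m + 3) • (b ^ (m + 1) * a ^ (m + 1)) + (m + 1) ^ 2 • (b ^ m * a ^ m) := by
  have hmid : b ^ (m + 1) * a * (b * a ^ (m + 1))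
      = b ^ (m + 2) * a ^ (m + 2) + b ^ (m + 1) * a ^ (m + 1) := by
    calc b ^ (m + 1) * a * (b * a ^ (m + 1)) = b ^ (m + 1) * (a * b) * a ^ (m + 1) := by
          noncomm_ring
      _ = b ^ (m + 1) * b * (a * a ^ (m + 1)) + b ^ (m + 1) * a ^ (m + 1) := by
          rw [h.mul_eq]; noncomm_ring
      _ = _ := by rw [← pow_succ, ← pow_succ']
  have hl : b ^ (m + 1) * a * a ^ m = b ^ (m + 1) * a ^ (m + 1) := by
    rw [mul_assoc, ← pow_succ']
  have hr : b ^ m * (b * a ^ (m + 1)) = b ^ (m + 1) * a ^ (m + 1) := by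
    rw [← mul_assoc, ← pow_succ]
  calc a * (b ^ (m + 1) * a ^ (m + 1)) * b - b * (b ^ (m + 1) * a ^ (m + 1)) * a
      = (a * b ^ (m + 1)) * (a ^ (m + 1) * b) - b ^ (m + 2) * a ^ (m + 2) := by
        rw [mul_pow_mul_pow_mul]; noncomm_ring
    _ = (b ^ (m + 1) * a + (m + 1) • b ^ m) * (b * a ^ (m + 1) + (m + 1) • a ^ m)
          - b ^ (m + 2) * a ^ (m + 2) := by
        rw [h.mul_pow_succ, h.pow_succ_mul]
    _ = _ := by
        simp only [add_mul, mul_add, smul_mul_assoc, mul_smul_comm, hmid, hl, hr]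
        module

lemma mul_mul_sub_mul_mul_mem_diagonalCone (h : IsCCRPair a b) (hx : x ∈ diagonalCone a b) :
    a * x * b - b * x * a ∈ diagonalCone a b := by
  refine map_mem_diagonalCone (f := (AddMonoidHom.mulRight b).comp (AddMonoidHom.mulLeft a)
    - (AddMonoidHom.mulRight a).comp (AddMonoidHom.mulLeft b)) (fun m => ?_) hx
  change a * _ * b - b * _ * a ∈ _
  cases m with
  | zero =>
    rw [pow_zero, pow_zero, mul_one, mul_one, mul_one, h]
    simpa using pow_mul_pow_mem_diagonalCone (a := a) (b := b) 0
  | succ m =>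
    rw [h.mul_pow_mul_pow_mul_sub]
    exact add_mem (nsmul_mem (pow_mul_pow_mem_diagonalCone _) _)
      (nsmul_mem (pow_mul_pow_mem_diagonalCone _) _)

lemma mul_mul_mem_diagonalCone (h : IsCCRPair a b) (hx : x ∈ diagonalCone a b) :
    a * x * b ∈ diagonalCone a b := by
  simpa using add_mem (h.mul_mul_sub_mul_mul_mem_diagonalCone hx)
    (_root_.mul_mul_mem_diagonalCone hx)

end IsCCRPair

end Ring

lemma diagonalCone_le_closure_star_mul_self {R : Type*} [Ring R] [StarRing R] (a : R) :
    diagonalCone a (star a) ≤ AddSubmonoid.closure (Set.range fun s : R => star s * s) :=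
  AddSubmonoid.closure_mono <| by
    rintro _ ⟨m, rfl⟩
    exact ⟨a ^ m, by simp only [star_pow]⟩

namespace WeylAlgebra

lemma isSOS_of_mem_closure_star_mul_self {n : ℕ} (W : WeylAlgebra n) {p : W.carrier}
    (hp : p ∈ AddSubmonoid.closure (Set.range fun s : W.carrier => star s * s)) : W.IsSOS p := by
  induction hp using AddSubmonoid.closure_induction with
  | mem _ hs =>
    obtain ⟨s, rfl⟩ := hs
    exact ⟨1, fun _ => s, by simp⟩
  | zero => exact ⟨0, finZeroElim, by simp⟩
  | add _ _ _ _ hp hq =>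
    obtain ⟨N, f, rfl⟩ := hp
    obtain ⟨M, g, rfl⟩ := hq
    exact ⟨N + M, Fin.append f g, by simp [Fin.sum_univ_add]⟩

variable (W : WeylAlgebra 1)

lemma isCCRPair : IsCCRPair (W.a 0) (star (W.a 0)) :=
  (W.ccr 0 0).trans (if_pos rfl)

lemma wordVal_cons_mul_star (l : Fin 1 ⊕ Fin 1) (u : List (Fin 1 ⊕ Fin 1)) :
    W.wordVal (l :: u) * star (W.wordVal (l :: u))
      = W.letterVal l * (W.wordVal u * star (W.wordVal u)) * star (W.letterVal l) := by
  simp only [wordVal, List.map_cons, List.prod_cons, star_mul, mul_assoc]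

lemma wordVal_mul_star_mem_diagonalCone (w : List (Fin 1 ⊕ Fin 1)) :
    W.wordVal w * star (W.wordVal w) ∈ diagonalCone (W.a 0) (star (W.a 0)) := by
  induction w with
  | nil => simpa [wordVal] using pow_mul_pow_mem_diagonalCone (a := W.a 0) 0
  | cons l u ih =>
    rw [wordVal_cons_mul_star]
    rcases l with i | i <;> obtain rfl := Subsingleton.elim i 0
    · exact W.isCCRPair.mul_mul_mem_diagonalCone ih
    · simpa [letterVal] using mul_mul_mem_diagonalCone ih

lemma pow_mul_star_pow_sub_wordVal_mul_star_mem_diagonalCone (w : List (Fin 1 ⊕ Fin 1)) :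
    W.a 0 ^ w.length * star (W.a 0) ^ w.length - W.wordVal w * star (W.wordVal w)
      ∈ diagonalCone (W.a 0) (star (W.a 0)) := by
  induction w with
  | nil => simp [wordVal, zero_mem]
  | cons l u ih =>
    set X := W.wordVal u * star (W.wordVal u)
    have hsplit : W.a 0 ^ (u.length + 1) * star (W.a 0) ^ (u.length + 1)
          - W.letterVal l * X * star (W.letterVal l)
        = W.a 0 * (W.a 0 ^ u.length * star (W.a 0) ^ u.length - X) * star (W.a 0)
          + (W.a 0 * X * star (W.a 0) - W.letterVal l * X * star (W.letterVal l)) := by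
      rw [pow_succ', pow_succ]
      noncomm_ring
    rw [List.length_cons, wordVal_cons_mul_star, hsplit]
    refine add_mem (W.isCCRPair.mul_mul_mem_diagonalCone ih) ?_
    rcases l with i | i <;> obtain rfl := Subsingleton.elim i 0
    · simp [letterVal, zero_mem]
    · simpa [letterVal] using W.isCCRPair.mul_mul_sub_mul_mul_mem_diagonalCone
        (W.wordVal_mul_star_mem_diagonalCone u)

end WeylAlgebra

/-- In `W₁`, for any monomial `s` (word `w` in the letters `a, a*`)
of length `k`, `a^k (a*)^k − s s* ∈ Σ²`. -/
theorem weyl1_antinormal_dominates (W : WeylAlgebra 1)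
    (w : List (Fin 1 ⊕ Fin 1)) (k : ℕ) (hk : w.length = k) :
    W.IsSOS (W.a 0 ^ k * star (W.a 0) ^ k - W.wordVal w * star (W.wordVal w)) := by
  subst hk
  exact W.isSOS_of_mem_closure_star_mul_self <| diagonalCone_le_closure_star_mul_self _ <|
    W.pow_mul_star_pow_sub_wordVal_mul_star_mem_diagonalCone w
end
end
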